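/- Let Σ ∈ H(n) be Hermitian positive definite and G(z) = (zI − A)⁻¹B. If there exists a bounded coercive spectral density Φ (i.e., Φ and Φ⁻¹ both essentially bounded, Φ(e^{iθ}) ≥ cI > 0) with ∫ G Φ G* = Σ, then there exists H ∈ ℂ^{m×n} such that Σ − AΣA* = BH + H*B*. -/

import Mathlib

open Matrix MeasureTheory
open scoped ComplexOrder

/-- Transfer function G(e^{iθ}) = (e^{iθ}I − A)⁻¹ B. -/
noncomputable def Gtf {n m : ℕ} (A : Matrix (Fin n) (Fin n) ℂ)
    (B : Matrix (Fin n) (Fin m) ℂ) (θ : ℝ) : Matrix (Fin n) (Fin m) ℂ :=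
  (Complex.exp (θ * Complex.I) • (1 : Matrix (Fin n) (Fin n) ℂ) - A)⁻¹ * B

/-- Γ(Φ) = (1/2π) ∫₀^{2π} G Φ G* dθ, computed entrywise. -/
noncomputable def GammaOp {n m : ℕ} (A : Matrix (Fin n) (Fin n) ℂ)
    (B : Matrix (Fin n) (Fin m) ℂ) (Φ : ℝ → Matrix (Fin m) (Fin m) ℂ) :
    Matrix (Fin n) (Fin n) ℂ := fun i j =>
  (∫ θ in (0:ℝ)..(2 * Real.pi), ((Gtf A B θ) * (Φ θ) * (Gtf A B θ)ᴴ) i j) /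
    (2 * Real.pi)

/-!
On the unit circle the transfer function satisfies `e^{iθ} G = A G + B`, and since `|e^{iθ}| = 1`
the integrand `X = G Φ G*` equals `(A G + B) Φ (A G + B)*`. Expanding and splitting the term
`B Φ B*` in halves gives the pointwise identity `X - A X A* = B N + N* B*` with
`N = Φ (A G + B / 2)*`; integrating it over the circle, `H = (1/2π) ∫ N` works.
-/

lemma Measurable.intervalIntegrable_of_norm_le {E : Type*} [NormedAddCommGroup E]
    [MeasurableSpace E] [OpensMeasurableSpace E] [SecondCountableTopology E]
    {μ : Measure ℝ} [IsLocallyFiniteMeasure μ] {f : ℝ → E} (hf : Measurable f) {C : ℝ}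
    (hC : ∀ x, ‖f x‖ ≤ C) (a b : ℝ) : IntervalIntegrable f μ a b := by
  rw [intervalIntegrable_iff]
  exact Measure.integrableOn_of_bounded
    ((measure_mono Set.uIoc_subset_uIcc).trans_lt isCompact_uIcc.measure_lt_top).ne
    hf.aestronglyMeasurable (ae_of_all _ hC)

section EntrywiseIntegral

variable {k l p : Type*} {μ : Measure ℝ} {a b : ℝ}

def EntrywiseIntervalIntegrable (M : ℝ → Matrix k l ℂ) (μ : Measure ℝ) (a b : ℝ) : Prop :=
  ∀ i j, IntervalIntegrable (fun θ => M θ i j) μ a b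

noncomputable def entrywiseIntervalIntegral (M : ℝ → Matrix k l ℂ) (μ : Measure ℝ) (a b : ℝ) :
    Matrix k l ℂ :=
  of fun i j => ∫ θ in a..b, M θ i j ∂μ

namespace EntrywiseIntervalIntegrable

theorem add {M N : ℝ → Matrix k l ℂ} (hM : EntrywiseIntervalIntegrable M μ a b)
    (hN : EntrywiseIntervalIntegrable N μ a b) :
    EntrywiseIntervalIntegrable (fun θ => M θ + N θ) μ a b :=
  fun i j => (hM i j).add (hN i j)

theorem conjTranspose {M : ℝ → Matrix k l ℂ} (hM : EntrywiseIntervalIntegrable M μ a b) :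
    EntrywiseIntervalIntegrable (fun θ => (M θ)ᴴ) μ a b := fun i j =>
  ⟨Complex.conjCLE.toContinuousLinearMap.integrable_comp (hM j i).1,
    Complex.conjCLE.toContinuousLinearMap.integrable_comp (hM j i).2⟩

theorem continuous_mul [Fintype k] {C : ℝ → Matrix p k ℂ} {M : ℝ → Matrix k l ℂ}
    (hC : Continuous C) (hM : EntrywiseIntervalIntegrable M μ a b) :
    EntrywiseIntervalIntegrable (fun θ => C θ * M θ) μ a b := fun i j => by
  simpa only [mul_apply, Finset.sum_fn] using IntervalIntegrable.sum Finset.univ fun r _ =>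
    (hM r j).continuousOn_mul (hC.matrix_elem i r).continuousOn

theorem mul_continuous [Fintype l] {M : ℝ → Matrix k l ℂ} {D : ℝ → Matrix l p ℂ}
    (hM : EntrywiseIntervalIntegrable M μ a b) (hD : Continuous D) :
    EntrywiseIntervalIntegrable (fun θ => M θ * D θ) μ a b := fun i j => by
  simpa only [mul_apply, Finset.sum_fn] using IntervalIntegrable.sum Finset.univ fun r _ =>
    (hM i r).mul_continuousOn (hD.matrix_elem r j).continuousOn

end EntrywiseIntervalIntegrable

theorem entrywiseIntervalIntegral_add {M N : ℝ → Matrix k l ℂ}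
    (hM : EntrywiseIntervalIntegrable M μ a b) (hN : EntrywiseIntervalIntegrable N μ a b) :
    entrywiseIntervalIntegral (fun θ => M θ + N θ) μ a b =
      entrywiseIntervalIntegral M μ a b + entrywiseIntervalIntegral N μ a b := by
  ext i j
  exact intervalIntegral.integral_add (hM i j) (hN i j)

theorem entrywiseIntervalIntegral_sub {M N : ℝ → Matrix k l ℂ}
    (hM : EntrywiseIntervalIntegrable M μ a b) (hN : EntrywiseIntervalIntegrable N μ a b) :
    entrywiseIntervalIntegral (fun θ => M θ - N θ) μ a b =
      entrywiseIntervalIntegral M μ a b - entrywiseIntervalIntegral N μ a b := by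
  ext i j
  exact intervalIntegral.integral_sub (hM i j) (hN i j)

theorem entrywiseIntervalIntegral_conjTranspose (M : ℝ → Matrix k l ℂ) :
    entrywiseIntervalIntegral (fun θ => (M θ)ᴴ) μ a b = (entrywiseIntervalIntegral M μ a b)ᴴ := by
  ext i j
  exact intervalIntegral.intervalIntegral_conj

theorem entrywiseIntervalIntegral_const_mul [Fintype k] (C : Matrix p k ℂ) {M : ℝ → Matrix k l ℂ}
    (hM : EntrywiseIntervalIntegrable M μ a b) :
    entrywiseIntervalIntegral (fun θ => C * M θ) μ a b = C * entrywiseIntervalIntegral M μ a b := by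
  ext i j
  simp only [entrywiseIntervalIntegral, of_apply, mul_apply]
  rw [intervalIntegral.integral_finsetSum fun r _ => (hM r j).const_mul _]
  simp only [intervalIntegral.integral_const_mul]

theorem entrywiseIntervalIntegral_mul_const [Fintype l] {M : ℝ → Matrix k l ℂ} (D : Matrix l p ℂ)
    (hM : EntrywiseIntervalIntegrable M μ a b) :
    entrywiseIntervalIntegral (fun θ => M θ * D) μ a b = entrywiseIntervalIntegral M μ a b * D := by
  ext i j
  simp only [entrywiseIntervalIntegral, of_apply, mul_apply]
  rw [intervalIntegral.integral_finsetSum fun r _ => (hM i r).mul_const _]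
  simp only [intervalIntegral.integral_mul_const]

theorem entrywiseIntervalIntegral_sub_mul_mul_conjTranspose [Fintype k] [Fintype l]
    {A : Matrix k k ℂ} {B : Matrix k l ℂ} {X : ℝ → Matrix k k ℂ} {N : ℝ → Matrix l k ℂ}
    (hX : EntrywiseIntervalIntegrable X μ a b) (hN : EntrywiseIntervalIntegrable N μ a b)
    (h : ∀ θ, X θ - A * X θ * Aᴴ = B * N θ + (N θ)ᴴ * Bᴴ) :
    entrywiseIntervalIntegral X μ a b - A * entrywiseIntervalIntegral X μ a b * Aᴴ =
      B * entrywiseIntervalIntegral N μ a b + (entrywiseIntervalIntegral N μ a b)ᴴ * Bᴴ := by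
  have hAX := hX.continuous_mul (continuous_const (y := A))
  rw [← entrywiseIntervalIntegral_const_mul _ hX, ← entrywiseIntervalIntegral_mul_const _ hAX,
    ← entrywiseIntervalIntegral_sub hX (hAX.mul_continuous continuous_const), funext h,
    entrywiseIntervalIntegral_add (hN.continuous_mul continuous_const)
      (hN.conjTranspose.mul_continuous continuous_const),
    entrywiseIntervalIntegral_const_mul _ hN,
    entrywiseIntervalIntegral_mul_const _ hN.conjTranspose,
    entrywiseIntervalIntegral_conjTranspose]

end EntrywiseIntegral

theorem sub_mul_mul_conjTranspose_eq {K : Type*} [Field K] [StarRing K] [NeZero (2 : K)]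
    {m n : Type*} [Fintype m] [Fintype n] {A : Matrix n n K} {B G : Matrix n m K}
    {Φ : Matrix m m K} (hΦ : Φ.IsHermitian) (hG : (A * G + B) * Φ * (A * G + B)ᴴ = G * Φ * Gᴴ) :
    G * Φ * Gᴴ - A * (G * Φ * Gᴴ) * Aᴴ =
      B * (Φ * (A * G + (2⁻¹ : K) • B)ᴴ) + (Φ * (A * G + (2⁻¹ : K) • B)ᴴ)ᴴ * Bᴴ := by
  nth_rw 1 [← hG]
  simp only [conjTranspose_add, conjTranspose_mul, conjTranspose_smul, star_inv₀, star_ofNat,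
    conjTranspose_conjTranspose, hΦ.eq, Matrix.add_mul, Matrix.mul_add, Matrix.smul_mul,
    Matrix.mul_smul, Matrix.mul_assoc]
  match_scalars <;> simp [← one_div, add_halves]

theorem det_smul_one_sub_ne_zero {n : Type*} [Fintype n] [DecidableEq n] {A : Matrix n n ℂ}
    (hstab : ∀ z : ℂ, (A - z • (1 : Matrix n n ℂ)).det = 0 → ‖z‖ < 1) {z : ℂ} (hz : ‖z‖ = 1) :
    (z • (1 : Matrix n n ℂ) - A).det ≠ 0 := fun h =>
  (hstab z (by rw [← neg_sub, det_neg, h, mul_zero])).ne hz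

theorem smul_inv_mul_eq_mul_inv_mul_add {R : Type*} [CommRing R] {m n : Type*} [Fintype n]
    [DecidableEq n] {A : Matrix n n R} {z : R} (hdet : IsUnit (z • (1 : Matrix n n R) - A).det)
    (B : Matrix n m R) :
    z • ((z • 1 - A)⁻¹ * B) = A * ((z • 1 - A)⁻¹ * B) + B := by
  have h := mul_nonsing_inv_cancel_left (z • 1 - A) B hdet
  rw [Matrix.sub_mul, Matrix.smul_mul, Matrix.one_mul, sub_eq_iff_eq_add] at h
  rw [h, add_comm]

section TransferFunction

variable {n m : ℕ} {A : Matrix (Fin n) (Fin n) ℂ}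
  (hstab : ∀ z : ℂ, (A - z • (1 : Matrix (Fin n) (Fin n) ℂ)).det = 0 → ‖z‖ < 1)
include hstab

theorem continuous_Gtf (B : Matrix (Fin n) (Fin m) ℂ) : Continuous (Gtf A B) := by
  have hM : Continuous fun θ : ℝ =>
      Complex.exp (θ * Complex.I) • (1 : Matrix (Fin n) (Fin n) ℂ) - A := by
    fun_prop
  have hdet (θ : ℝ) := det_smul_one_sub_ne_zero hstab (Complex.norm_exp_ofReal_mul_I θ)
  have hinv : Continuous fun θ : ℝ =>
      (Complex.exp (θ * Complex.I) • (1 : Matrix (Fin n) (Fin n) ℂ) - A)⁻¹ := by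
    simp only [inv_def, Ring.inverse_eq_inv']
    exact (hM.matrix_det.inv₀ hdet).smul hM.matrix_adjugate
  exact hinv.matrix_mul continuous_const

theorem exp_smul_Gtf (B : Matrix (Fin n) (Fin m) ℂ) (θ : ℝ) :
    Complex.exp (θ * Complex.I) • Gtf A B θ = A * Gtf A B θ + B :=
  smul_inv_mul_eq_mul_inv_mul_add
    (det_smul_one_sub_ne_zero hstab (Complex.norm_exp_ofReal_mul_I θ)).isUnit B

end TransferFunction

theorem Gtf_mul_mul_conjTranspose_sub {n m : ℕ} {A : Matrix (Fin n) (Fin n) ℂ}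
    (hstab : ∀ z : ℂ, (A - z • (1 : Matrix (Fin n) (Fin n) ℂ)).det = 0 → ‖z‖ < 1)
    (B : Matrix (Fin n) (Fin m) ℂ) {Φ : Matrix (Fin m) (Fin m) ℂ} (hΦ : Φ.IsHermitian) (θ : ℝ) :
    Gtf A B θ * Φ * (Gtf A B θ)ᴴ - A * (Gtf A B θ * Φ * (Gtf A B θ)ᴴ) * Aᴴ =
      B * (Φ * (A * Gtf A B θ + (2⁻¹ : ℂ) • B)ᴴ) +
        (Φ * (A * Gtf A B θ + (2⁻¹ : ℂ) • B)ᴴ)ᴴ * Bᴴ := by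
  refine sub_mul_mul_conjTranspose_eq hΦ ?_
  rw [← exp_smul_Gtf hstab]
  simp only [conjTranspose_smul, Matrix.smul_mul, Matrix.mul_smul, smul_smul, Complex.star_def,
    Complex.conj_mul', Complex.norm_exp_ofReal_mul_I]
  simp

theorem GammaOp_eq_smul_entrywiseIntervalIntegral {n m : ℕ} (A : Matrix (Fin n) (Fin n) ℂ)
    (B : Matrix (Fin n) (Fin m) ℂ) (Φ : ℝ → Matrix (Fin m) (Fin m) ℂ) :
    GammaOp A B Φ = (2 * Real.pi)⁻¹ • entrywiseIntervalIntegral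
      (fun θ => Gtf A B θ * Φ θ * (Gtf A B θ)ᴴ) volume 0 (2 * Real.pi) := by
  ext i j
  simp [GammaOp, entrywiseIntervalIntegral, div_eq_inv_mul]

theorem stmt_8_general {n m : ℕ} (A : Matrix (Fin n) (Fin n) ℂ) (B : Matrix (Fin n) (Fin m) ℂ)
    (hstab : ∀ z : ℂ, (A - z • (1 : Matrix (Fin n) (Fin n) ℂ)).det = 0 → ‖z‖ < 1)
    (Sig : Matrix (Fin n) (Fin n) ℂ)
    (hexists : ∃ Φ : ℝ → Matrix (Fin m) (Fin m) ℂ,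
      (∀ i j, Measurable fun θ => Φ θ i j) ∧
      Function.Periodic Φ (2 * Real.pi) ∧ (∀ θ, (Φ θ).IsHermitian) ∧
      (∃ C : ℝ, ∀ θ i j, ‖Φ θ i j‖ ≤ C) ∧
      (∃ c : ℝ, 0 < c ∧ ∀ θ,
        ((Φ θ) - c • (1 : Matrix (Fin m) (Fin m) ℂ)).PosSemidef) ∧
      GammaOp A B Φ = Sig) :
    ∃ H : Matrix (Fin m) (Fin n) ℂ,
      Sig - A * Sig * Aᴴ = B * H + Hᴴ * Bᴴ := by
  obtain ⟨Φ, hmeas, -, hherm, ⟨C, hbd⟩, -, rfl⟩ := hexists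
  have hG : Continuous (Gtf A B) := continuous_Gtf hstab B
  have hΦ : EntrywiseIntervalIntegrable Φ volume 0 (2 * Real.pi) := fun i j =>
    (hmeas i j).intervalIntegrable_of_norm_le (hbd · i j) _ _
  have hX := (hΦ.continuous_mul hG).mul_continuous hG.matrix_conjTranspose
  set N := fun θ => Φ θ * (A * Gtf A B θ + (2⁻¹ : ℂ) • B)ᴴ
  have hN : EntrywiseIntervalIntegrable N volume 0 (2 * Real.pi) :=
    hΦ.mul_continuous ((continuous_const.matrix_mul hG).add continuous_const).matrix_conjTranspose
  refine ⟨(2 * Real.pi)⁻¹ • entrywiseIntervalIntegral N volume 0 (2 * Real.pi), ?_⟩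
  rw [GammaOp_eq_smul_entrywiseIntervalIntegral, conjTranspose_smul, star_trivial,
    Matrix.mul_smul, Matrix.smul_mul, Matrix.smul_mul, Matrix.mul_smul, ← smul_sub, ← smul_add,
    entrywiseIntervalIntegral_sub_mul_mul_conjTranspose hX hN
      fun θ => Gtf_mul_mul_conjTranspose_sub hstab B (hherm θ) θ]

theorem stmt_8 {n m : ℕ} (A : Matrix (Fin n) (Fin n) ℂ) (B : Matrix (Fin n) (Fin m) ℂ)
    (hstab : ∀ z : ℂ, (A - z • (1 : Matrix (Fin n) (Fin n) ℂ)).det = 0 → ‖z‖ < 1)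
    (hB : B.rank = m)
    (hreach : ∀ x : Fin n → ℂ, (∀ k : ℕ, Matrix.vecMul x (A ^ k * B) = 0) → x = 0)
    (Sig : Matrix (Fin n) (Fin n) ℂ) (hSig : Sig.PosDef)
    (hexists : ∃ Φ : ℝ → Matrix (Fin m) (Fin m) ℂ,
      (∀ i j, Measurable fun θ => Φ θ i j) ∧
      Function.Periodic Φ (2 * Real.pi) ∧ (∀ θ, (Φ θ).IsHermitian) ∧
      (∃ C : ℝ, ∀ θ i j, ‖Φ θ i j‖ ≤ C) ∧
      (∃ c : ℝ, 0 < c ∧ ∀ θ,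
        ((Φ θ) - c • (1 : Matrix (Fin m) (Fin m) ℂ)).PosSemidef) ∧
      GammaOp A B Φ = Sig) :
    ∃ H : Matrix (Fin m) (Fin n) ℂ,
      Sig - A * Sig * Aᴴ = B * H + Hᴴ * Bᴴ :=
  stmt_8_general A B hstab Sig hexists
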